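/- arXiv:1904.03844 — 3 statements merged into one kernel-verified Lean document; each statement's English description precedes it below -/
import Mathlib

section
/- Let M be a prime number, E a finite set, and n ≥ 1. For i = 1, …, n let s_i : E → {−1, 0, 1} ⊆ ℤ and define ℓ_i(f) = ∑_{e ∈ E} s_i(e) · f(e) ∈ ZMod M for f : E → ZMod M. Assume the staircase condition: there exist edges e_1, …, e_n ∈ E with s_i(e_i) ∈ {−1, 1} and s_j(e_i) = 0 for all j < i. Then the number of functions f : E → ZMod M such that ℓ_i(f) ≠ 0 for at least one i ∈ {1, …, n} equals M^{|E|} − M^{|E| − n}. Equivalently, the fraction of relocation arrangements under which the UAS becomes inactive is F_nou = 1 − 1/M^{n}. -/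
/-!
The cycle conditions are the coordinates of `A *ᵥ f`, where `A` is the `n × |E|` matrix of
the signed incidence vectors over `ZMod M`. The columns of `A` at the staircase edges form a
lower triangular square matrix with unit diagonal, hence an invertible one, so `A *ᵥ ·` is
surjective. By rank–nullity its kernel, the set of arrangements keeping every basic cycle
active, has dimension `|E| - n` and thus `M ^ (|E| - n)` elements; the inactive arrangements
are its complement.
-/

namespace Matrix

variable {R : Type*} [CommRing R] {m ι : Type*} [Fintype m] [LinearOrder m]

theorem isUnit_submatrix_of_staircase [DecidableEq m] (A : Matrix m ι R) (e : m → ι)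
    (hpivot : ∀ i, IsUnit (A i (e i))) (hzero : ∀ i j, j < i → A j (e i) = 0) :
    IsUnit (A.submatrix id e) := by
  have hlower : (A.submatrix id e).IsLowerTriangular := fun j i hij => hzero i j hij
  rw [isUnit_iff_isUnit_det, det_of_isLowerTriangular _ hlower]
  exact IsUnit.prod_univ_iff.mpr hpivot

theorem mulVec_surjective_of_staircase [DecidableEq m] [Fintype ι] (A : Matrix m ι R) (e : m → ι)
    (hpivot : ∀ i, IsUnit (A i (e i))) (hzero : ∀ i j, j < i → A j (e i) = 0) :
    Function.Surjective A.mulVec := by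
  have hB := mulVec_surjective_iff_isUnit.mpr (isUnit_submatrix_of_staircase A e hpivot hzero)
  have hrange : LinearMap.range (A.submatrix id e).mulVecLin ≤ LinearMap.range A.mulVecLin := by
    rw [range_mulVecLin, range_mulVecLin]
    exact Submodule.span_mono (Set.range_comp_subset_range e A.col)
  intro w
  exact hrange (LinearMap.mem_range.mpr (hB w))

end Matrix

theorem LinearMap.card_apply_ne_zero_of_surjective {K V W : Type*} [Field K] [Fintype K]
    [AddCommGroup V] [Module K V] [Fintype V] [AddCommGroup W] [Module K W]
    (L : V →ₗ[K] W) (hL : Function.Surjective L) :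
    Nat.card {v : V // L v ≠ 0}
      = Fintype.card K ^ Module.finrank K V
        - Fintype.card K ^ (Module.finrank K V - Module.finrank K W) := by
  classical
  have hker : Module.finrank K (LinearMap.ker L) = Module.finrank K V - Module.finrank K W := by
    have := L.finrank_range_add_finrank_ker
    rw [LinearMap.range_eq_top.mpr hL, finrank_top] at this
    omega
  rw [Nat.card_eq_fintype_card, Fintype.card_subtype_compl, Module.card_eq_pow_finrank (K := K),
    ← hker, ← Module.card_eq_pow_finrank (K := K) (V := LinearMap.ker L)]
  rfl

theorem stmt_3_general (M : ℕ) (hM : M.Prime) (E : Type*) [Fintype E] (n : ℕ)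
    (s : Fin n → E → ℤ)
    (hstair : ∃ e : Fin n → E, ∀ i : Fin n,
      (s i (e i) = 1 ∨ s i (e i) = -1) ∧ ∀ j : Fin n, j < i → s j (e i) = 0) :
    Nat.card {f : E → ZMod M // ∃ i : Fin n, ∑ e : E, (s i e : ZMod M) * f e ≠ 0}
      = M ^ Fintype.card E - M ^ (Fintype.card E - n) := by
  classical
  have : Fact M.Prime := ⟨hM⟩
  have : NeZero M := ⟨hM.ne_zero⟩
  obtain ⟨e, he⟩ := hstair
  let A : Matrix (Fin n) E (ZMod M) := Matrix.of fun i x => (s i x : ZMod M)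
  have hsurj : Function.Surjective A.mulVec := by
    refine A.mulVec_surjective_of_staircase e (fun i => ?_) fun i j hji => ?_
    · rcases (he i).1 with h | h <;> simp [A, h]
    · simp [A, (he i).2 j hji]
  have hcount := A.mulVecLin.card_apply_ne_zero_of_surjective hsurj
  simp only [Module.finrank_fintype_fun_eq_card, ZMod.card, Fintype.card_fin] at hcount
  rw [← hcount]
  refine Nat.card_congr (Equiv.subtypeEquivRight fun f => ?_)
  simp [Function.ne_iff, Matrix.mulVec, dotProduct, A]

/-- For prime `M`, signed incidence vectors `s i : E → {-1,0,1}` of `n` basic cycles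
satisfying the staircase condition, the number of relocation arrangements
`f : E → ZMod M` under which the UAS becomes inactive (some basic cycle has
`∑ e, s i e * f e ≠ 0`) is `M^|E| - M^(|E|-n)`, i.e. `F_nou = 1 - 1/Mⁿ`. -/
theorem stmt_3 (M : ℕ) (hM : M.Prime) (E : Type*) [Fintype E] (n : ℕ) (hn : 1 ≤ n)
    (s : Fin n → E → ℤ) (hs : ∀ i e, s i e = -1 ∨ s i e = 0 ∨ s i e = 1)
    (hstair : ∃ e : Fin n → E, ∀ i : Fin n,
      (s i (e i) = 1 ∨ s i (e i) = -1) ∧ ∀ j : Fin n, j < i → s j (e i) = 0) :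
    Nat.card {f : E → ZMod M // ∃ i : Fin n, ∑ e : E, (s i e : ZMod M) * f e ≠ 0}
      = M ^ Fintype.card E - M ^ (Fintype.card E - n) :=
  stmt_3_general M hM E n s hstair
end

section
/- Let M be a prime number, E a finite set, and n ≥ 1. For i = 1, …, n let s_i : E → {−1, 0, 1} ⊆ ℤ and define ℓ_i(f) = ∑_{e ∈ E} s_i(e) · f(e) ∈ ZMod M for f : E → ZMod M. Assume the staircase condition: there exist edges e_1, …, e_n ∈ E with s_i(e_i) ∈ {−1, 1} and s_j(e_i) = 0 for all j < i. Let J ⊆ {1, …, n} and let P be a set of unordered pairs of distinct indices from {1, …, n}. For j ∈ J define A_j = {f : ℓ_j(f) ≠ 0 and ℓ_i(f) = 0 for all i ≠ j}, and for {j, k} ∈ P define B_{j,k} = {f : ℓ_j(f) ≠ 0, ℓ_j(f) + ℓ_k(f) = 0, and ℓ_i(f) = 0 for all i ∉ {j, k}}. Then: (i) the sets A_j (j ∈ J) and B_{j,k} ({j,k} ∈ P) are pairwise disjoint; and (ii) the number of functions f : E → ZMod M such that ℓ_i(f) ≠ 0 for at least one i but f lies in none of the sets A_j or B_{j,k} equals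 M^{|E|} − M^{|E| − n} − (|J| + |P|) · (M − 1) · M^{|E| − n}. Equivalently, the corresponding fraction of relocation arrangements is 1 − 1/M^n − (|J| + |P|)(M − 1)/M^n. -/
/-!
The map `f ↦ (ℓ_i f)_i` is an additive map `Λ : (E → ℤ/M) → (ℤ/M)ⁿ` whose matrix, restricted to
the staircase columns `e_1, …, e_n`, is lower triangular with diagonal `±1`; hence `Λ` is
surjective and each of its fibres has `M^(|E|-n)` elements. The count is therefore
`M^(|E|-n)` times the number of vectors `v ∈ (ℤ/M)ⁿ` that are nonzero, not supported exactly at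
some `j ∈ J`, and not of the form `c (δ_j - δ_k)` with `c ≠ 0` and `(j, k) ∈ P`. Each of these
`|J| + |P|` families has `M - 1` members, and they are pairwise disjoint because their members
have different supports.
-/

open Finset

namespace AddMonoidHom

variable {G H : Type*} [AddGroup G] [AddGroup H] (φ : G →+ H)

noncomputable def preimageEquivProdKer (hφ : Function.Surjective φ) (S : Set H) :
    φ ⁻¹' S ≃ S × φ.ker where
  toFun g := (⟨φ g, g.2⟩, ⟨-Function.surjInv hφ (φ g) + g, by
    simp [mem_ker, Function.surjInv_eq hφ]⟩)
  invFun x := ⟨Function.surjInv hφ x.1 + x.2, by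
    simp [mem_ker.1 x.2.2, Function.surjInv_eq hφ]⟩
  left_inv g := by ext; simp
  right_inv x := by ext <;> simp [mem_ker.1 x.2.2, Function.surjInv_eq hφ]

theorem card_preimage_of_surjective (hφ : Function.Surjective φ) (S : Set H) :
    Nat.card (φ ⁻¹' S) = Nat.card S * Nat.card φ.ker := by
  rw [Nat.card_congr (preimageEquivProdKer φ hφ S), Nat.card_prod]

theorem card_eq_card_mul_card_ker (hφ : Function.Surjective φ) :
    Nat.card G = Nat.card H * Nat.card φ.ker := by
  simpa using card_preimage_of_surjective φ hφ Set.univ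

end AddMonoidHom

theorem Matrix.mulVec_surjective_of_staircase_s7 {R m n : Type*} [CommRing R] [Fintype m]
    [LinearOrder m] [Fintype n] [DecidableEq n] (A : Matrix m n R) (e : m → n)
    (hzero : ∀ i j, j < i → A j (e i) = 0) (hdiag : ∀ i, IsUnit (A i (e i))) :
    Function.Surjective A.mulVec := by
  have hsq : IsUnit (A.submatrix id e) := by
    rw [isUnit_iff_isUnit_det,
      det_of_isLowerTriangular (A.submatrix id e) fun i k hik => hzero k i hik]
    exact IsUnit.prod_univ_iff.2 hdiag
  have hfactor : A * (1 : Matrix n n R).submatrix (Equiv.refl n) e = A.submatrix id e := by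
    rw [mul_submatrix_one]; rfl
  rw [← mulVec_surjective_iff_isUnit, ← hfactor] at hsq
  intro v
  obtain ⟨c, hc⟩ := hsq v
  exact ⟨_, (mulVec_mulVec _ _ _).trans hc⟩

section ExactSupport

variable {ι K : Type*} [AddGroup K]

def IsSingleAt (j : ι) (v : ι → K) : Prop :=
  v j ≠ 0 ∧ ∀ i, i ≠ j → v i = 0

def IsCancellingPairAt (p : ι × ι) (v : ι → K) : Prop :=
  v p.1 ≠ 0 ∧ v p.1 + v p.2 = 0 ∧ ∀ i, i ≠ p.1 → i ≠ p.2 → v i = 0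

instance [Fintype ι] [DecidableEq ι] [DecidableEq K] (j : ι) :
    DecidablePred (IsSingleAt (K := K) j) :=
  fun _ => inferInstanceAs (Decidable (_ ∧ _))

instance [Fintype ι] [DecidableEq ι] [DecidableEq K] (p : ι × ι) :
    DecidablePred (IsCancellingPairAt (K := K) p) :=
  fun _ => inferInstanceAs (Decidable (_ ∧ _))

variable {j j' i : ι} {p p' : ι × ι} {v : ι → K}

theorem IsSingleAt.ne_zero_iff (h : IsSingleAt j v) : v i ≠ 0 ↔ i = j :=
  ⟨fun hi => by_contra fun hij => hi (h.2 i hij), fun hij => hij ▸ h.1⟩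

theorem IsCancellingPairAt.ne_zero_iff (h : IsCancellingPairAt p v) :
    v i ≠ 0 ↔ i = p.1 ∨ i = p.2 := by
  have h₂ : v p.2 ≠ 0 := fun h0 => h.1 (by simpa [h0] using h.2.1)
  refine ⟨fun hi => ?_, ?_⟩
  · by_contra! hne
    exact hi (h.2.2 i hne.1 hne.2)
  · rintro (rfl | rfl)
    exacts [h.1, h₂]

theorem IsSingleAt.unique (h : IsSingleAt j v) (h' : IsSingleAt j' v) : j = j' :=
  h'.ne_zero_iff.1 h.1

theorem IsCancellingPairAt.unique [LinearOrder ι] (hp : p.1 < p.2) (hp' : p'.1 < p'.2)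
    (h : IsCancellingPairAt p v) (h' : IsCancellingPairAt p' v) : p = p' := by
  have hsupp : ∀ i, i = p.1 ∨ i = p.2 ↔ i = p'.1 ∨ i = p'.2 := fun i =>
    h.ne_zero_iff.symm.trans h'.ne_zero_iff
  have h₁ := (hsupp p.1).1 (.inl rfl)
  have h₂ := (hsupp p.2).1 (.inr rfl)
  have h₁' := (hsupp p'.1).2 (.inl rfl)
  ext <;> grind

theorem IsSingleAt.not_isCancellingPairAt (hp : p.1 ≠ p.2) (h : IsSingleAt j v) :
    ¬IsCancellingPairAt p v := fun h' =>
  hp ((h.ne_zero_iff.1 (h'.ne_zero_iff.2 (.inl rfl))).trans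
    (h.ne_zero_iff.1 (h'.ne_zero_iff.2 (.inr rfl))).symm)

variable [Fintype K] [DecidableEq K]

section card

variable [Fintype ι] [DecidableEq ι]

theorem card_isSingleAt (j : ι) : #{v : ι → K | IsSingleAt j v} = Fintype.card K - 1 := by
  have : ({v : ι → K | IsSingleAt j v} : Finset _) = (univ.erase 0).image (Pi.single j) := by
    ext v
    simp only [mem_filter, mem_univ, true_and, mem_image, mem_erase, and_true]
    refine ⟨fun h => ⟨v j, h.1, ?_⟩, ?_⟩
    · ext i
      by_cases hij : i = j
      · subst hij; simp
      · simp [hij, h.2 i hij]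
    · rintro ⟨c, hc, rfl⟩
      exact ⟨by simpa using hc, fun i hij => by simp [hij]⟩
  rw [this, card_image_of_injective _ (Pi.single_injective j), card_erase_of_mem (mem_univ _),
    card_univ]

theorem card_isCancellingPairAt (hp : p.1 ≠ p.2) :
    #{v : ι → K | IsCancellingPairAt p v} = Fintype.card K - 1 := by
  have : ({v : ι → K | IsCancellingPairAt p v} : Finset _) =
      (univ.erase 0).image fun c => (Pi.single p.1 c - Pi.single p.2 c : ι → K) := by
    ext v
    simp only [mem_filter, mem_univ, true_and, mem_image, mem_erase, and_true]
    refine ⟨fun h => ⟨v p.1, h.1, ?_⟩, ?_⟩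
    · ext i
      by_cases hi₁ : i = p.1
      · subst hi₁; simp [hp]
      by_cases hi₂ : i = p.2
      · subst hi₂; simp [hi₁, eq_neg_of_add_eq_zero_right h.2.1]
      · simp [hi₁, hi₂, h.2.2 i hi₁ hi₂]
    · rintro ⟨c, hc, rfl⟩
      exact ⟨by simpa [hp] using hc, by simp [hp, Ne.symm hp],
        fun i hi₁ hi₂ => by simp [hi₁, hi₂]⟩
  have hinj : Function.Injective fun c : K => (Pi.single p.1 c - Pi.single p.2 c : ι → K) :=
    fun a b hab => by simpa [hp] using congrFun hab p.1
  rw [this, card_image_of_injective _ hinj, card_erase_of_mem (mem_univ _), card_univ]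

end card

theorem card_avoiding_isSingleAt_isCancellingPairAt [Fintype ι] [LinearOrder ι] (J : Finset ι)
    (P : Finset (ι × ι)) (hP : ∀ p ∈ P, p.1 < p.2) :
    Nat.card {v : ι → K |
        v ≠ 0 ∧ (∀ j ∈ J, ¬IsSingleAt j v) ∧ ∀ p ∈ P, ¬IsCancellingPairAt p v} =
      Fintype.card K ^ Fintype.card ι - (1 + (#J + #P) * (Fintype.card K - 1)) := by
  set singles := J.biUnion fun j => ({v | IsSingleAt j v} : Finset (ι → K))
  set pairs := P.biUnion fun p => ({v | IsCancellingPairAt p v} : Finset (ι → K))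
  have hcompl : {v : ι → K | v ≠ 0 ∧ (∀ j ∈ J, ¬IsSingleAt j v) ∧
      ∀ p ∈ P, ¬IsCancellingPairAt p v} = ↑(univ \ insert 0 (singles ∪ pairs)) := by
    ext v
    simp [singles, pairs]
  have h0 : (0 : ι → K) ∉ singles ∪ pairs := by
    simp only [singles, pairs, mem_union, mem_biUnion, mem_filter]
    rintro (⟨j, -, -, h⟩ | ⟨p, -, -, h⟩)
    exacts [h.1 rfl, h.1 rfl]
  have hdisj : Disjoint singles pairs := by
    simp only [singles, pairs, disjoint_biUnion_left, disjoint_biUnion_right, disjoint_filter]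
    intro p hp j _ v _ h
    exact h.not_isCancellingPairAt (hP p hp).ne
  have hcard_singles : #singles = #J * (Fintype.card K - 1) := by
    rw [card_biUnion, sum_const_nat fun j _ => card_isSingleAt j]
    exact fun j _ j' _ hne => disjoint_filter.2 fun v _ h h' => hne (h.unique h')
  have hcard_pairs : #pairs = #P * (Fintype.card K - 1) := by
    rw [card_biUnion, sum_const_nat fun p hp => card_isCancellingPairAt (hP p hp).ne]
    exact fun p hp p' hp' hne =>
      disjoint_filter.2 fun v _ h h' => hne (h.unique (hP p hp) (hP p' hp') h')
  rw [hcompl, coe_sort_coe, Nat.card_eq_finsetCard, card_sdiff_of_subset (subset_univ _),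
    card_univ, Fintype.card_fun, card_insert_of_notMem h0, card_union_of_disjoint hdisj,
    hcard_singles, hcard_pairs]
  ring_nf

end ExactSupport

theorem Nat.le_and_eq_pow_sub_of_pow_eq_pow_mul {b m n k : ℕ} (hb : 1 < b)
    (h : b ^ m = b ^ n * k) : n ≤ m ∧ k = b ^ (m - n) := by
  have hnm : n ≤ m := (Nat.pow_dvd_pow_iff_le_right hb).1 (Dvd.intro k h.symm)
  refine ⟨hnm, Nat.eq_of_mul_eq_mul_left (pow_pos (Nat.zero_lt_of_lt hb) n) ?_⟩
  rw [← h, pow_mul_pow_sub b hnm]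

theorem stmt_7_general (M : ℕ) (hM : M.Prime) (E : Type*) [Fintype E] (n : ℕ)
    (s : Fin n → E → ℤ)
    (hstair : ∃ e : Fin n → E, ∀ i : Fin n,
      (s i (e i) = 1 ∨ s i (e i) = -1) ∧ ∀ j : Fin n, j < i → s j (e i) = 0)
    (J : Finset (Fin n)) (P : Finset (Fin n × Fin n)) (hP : ∀ p ∈ P, p.1 < p.2)
    (ℓ : Fin n → (E → ZMod M) → ZMod M)
    (hℓ : ∀ i f, ℓ i f = ∑ e : E, (s i e : ZMod M) * f e)
    (A : Fin n → Set (E → ZMod M))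
    (hA : ∀ j, A j = {f | ℓ j f ≠ 0 ∧ ∀ i : Fin n, i ≠ j → ℓ i f = 0})
    (B : Fin n × Fin n → Set (E → ZMod M))
    (hB : ∀ p, B p = {f | ℓ p.1 f ≠ 0 ∧ ℓ p.1 f + ℓ p.2 f = 0 ∧
      ∀ i : Fin n, i ≠ p.1 → i ≠ p.2 → ℓ i f = 0}) :
    ((∀ j ∈ J, ∀ j' ∈ J, j ≠ j' → Disjoint (A j) (A j')) ∧
     (∀ p ∈ P, ∀ p' ∈ P, p ≠ p' → Disjoint (B p) (B p')) ∧
     (∀ j ∈ J, ∀ p ∈ P, Disjoint (A j) (B p))) ∧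
    Nat.card {f : E → ZMod M //
        (∃ i : Fin n, ℓ i f ≠ 0) ∧ (∀ j ∈ J, f ∉ A j) ∧ (∀ p ∈ P, f ∉ B p)}
      = M ^ Fintype.card E - M ^ (Fintype.card E - n)
          - (J.card + P.card) * ((M - 1) * M ^ (Fintype.card E - n)) := by
  classical
  have : NeZero M := ⟨hM.ne_zero⟩
  obtain ⟨e, he⟩ := hstair
  set S : Matrix (Fin n) E (ZMod M) := Matrix.of fun i x => (s i x : ZMod M)
  set Λ : (E → ZMod M) →+ (Fin n → ZMod M) := S.mulVecLin.toAddMonoidHom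
  have hΛ : Function.Surjective Λ :=
    S.mulVec_surjective_of_staircase_s7 e (fun i j hji => by simp [S, (he i).2 j hji])
      fun i => by rcases (he i).1 with h | h <;> simp [S, h]
  obtain rfl : ℓ = fun i f => Λ f i := funext₂ hℓ
  obtain rfl : A = fun j => Λ ⁻¹' {v | IsSingleAt j v} := funext hA
  obtain rfl : B = fun p => Λ ⁻¹' {v | IsCancellingPairAt p v} := funext hB
  refine ⟨⟨fun j _ j' _ hne => ?_, fun p hp p' hp' hne => ?_, fun j _ p hp => ?_⟩, ?_⟩
  · exact (Set.disjoint_left.2 fun v h h' => hne (h.unique h')).preimage Λ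
  · exact (Set.disjoint_left.2 fun v h h' =>
      hne (h.unique (hP p hp) (hP p' hp') h')).preimage Λ
  · exact (Set.disjoint_left.2 fun v h => h.not_isCancellingPairAt (hP p hp).ne).preimage Λ
  obtain ⟨hnE, hker⟩ := Nat.le_and_eq_pow_sub_of_pow_eq_pow_mul hM.one_lt (by
    simpa only [Nat.card_fun, Nat.card_zmod, Nat.card_eq_fintype_card (α := E), Nat.card_fin]
      using Λ.card_eq_card_mul_card_ker hΛ)
  trans Nat.card (Λ ⁻¹'
    {v | v ≠ 0 ∧ (∀ j ∈ J, ¬IsSingleAt j v) ∧ ∀ p ∈ P, ¬IsCancellingPairAt p v})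
  · exact Nat.card_congr (Equiv.subtypeEquivRight fun f => by simp [Function.ne_iff])
  rw [Λ.card_preimage_of_surjective hΛ, card_avoiding_isSingleAt_isCancellingPairAt J P hP,
    ZMod.card, Fintype.card_fin, hker, Nat.sub_mul, ← pow_add, Nat.add_sub_cancel' hnE, add_mul,
    one_mul, mul_assoc, Nat.sub_sub]

/-- Theorem 2, equation (15): for prime `M` and `n` basic cycles (signed incidence
vectors `s i : E → {-1,0,1}` with the staircase condition), given a set `J` of
indices and a set `P` of unordered pairs of distinct indices (encoded as ordered
pairs `p` with `p.1 < p.2`), the sets `A j` (exactly basic cycle `j` inactive,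
all others active) and `B p` (basic cycles `p.1, p.2` inactive with their sum
cycle active, all others active) are pairwise disjoint, and the number of
relocation arrangements making the UAS inactive while avoiding every `A j`
(`j ∈ J`) and every `B p` (`p ∈ P`) is
`M^|E| - M^(|E|-n) - (|J| + |P|)(M-1)M^(|E|-n)`, i.e. the fraction
`F_not = 1 - 1/Mⁿ - (|J|+|P|)(M-1)/Mⁿ`. -/
theorem stmt_7 (M : ℕ) (hM : M.Prime) (E : Type*) [Fintype E] (n : ℕ) (hn : 1 ≤ n)
    (s : Fin n → E → ℤ) (hs : ∀ i e, s i e = -1 ∨ s i e = 0 ∨ s i e = 1)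
    (hstair : ∃ e : Fin n → E, ∀ i : Fin n,
      (s i (e i) = 1 ∨ s i (e i) = -1) ∧ ∀ j : Fin n, j < i → s j (e i) = 0)
    (J : Finset (Fin n)) (P : Finset (Fin n × Fin n)) (hP : ∀ p ∈ P, p.1 < p.2)
    (ℓ : Fin n → (E → ZMod M) → ZMod M)
    (hℓ : ∀ i f, ℓ i f = ∑ e : E, (s i e : ZMod M) * f e)
    (A : Fin n → Set (E → ZMod M))
    (hA : ∀ j, A j = {f | ℓ j f ≠ 0 ∧ ∀ i : Fin n, i ≠ j → ℓ i f = 0})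
    (B : Fin n × Fin n → Set (E → ZMod M))
    (hB : ∀ p, B p = {f | ℓ p.1 f ≠ 0 ∧ ℓ p.1 f + ℓ p.2 f = 0 ∧
      ∀ i : Fin n, i ≠ p.1 → i ≠ p.2 → ℓ i f = 0}) :
    ((∀ j ∈ J, ∀ j' ∈ J, j ≠ j' → Disjoint (A j) (A j')) ∧
     (∀ p ∈ P, ∀ p' ∈ P, p ≠ p' → Disjoint (B p) (B p')) ∧
     (∀ j ∈ J, ∀ p ∈ P, Disjoint (A j) (B p))) ∧
    Nat.card {f : E → ZMod M //
        (∃ i : Fin n, ℓ i f ≠ 0) ∧ (∀ j ∈ J, f ∉ A j) ∧ (∀ p ∈ P, f ∉ B p)}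
      = M ^ Fintype.card E - M ^ (Fintype.card E - n)
          - (J.card + P.card) * ((M - 1) * M ^ (Fintype.card E - n)) :=
  stmt_7_general M hM E n s hstair J P hP ℓ hℓ A hA B hB
end

section
/- Let M be a prime number, E a finite set, and n ≥ 1, and let A ≥ 1. Suppose there are A 'stand-alone' instances: for each g = 1, …, A there are coefficient functions s_{g,1}, …, s_{g,n} : E → {−1, 0, 1} ⊆ ℤ satisfying the staircase condition (there exist edges e_{g,1}, …, e_{g,n} with s_{g,i}(e_{g,i}) ∈ {−1, 1} and s_{g,j}(e_{g,i}) = 0 for all j < i), and the supports {e ∈ E : s_{g,i}(e) ≠ 0 for some i} of distinct instances g are pairwise disjoint. Define ℓ_{g,i}(f) = ∑_{e ∈ E} s_{g,i}(e) · f(e) ∈ ZMod M. Then ∑_{f : E → ZMod M} M · |{g ∈ {1, …, A} : ℓ_{g,i}(f) = 0 for all i = 1, …, n}| = A · M · M^{|E| − n}. Equivalently, averaging over all M^{|E|} relocation arrangements f, the average value of M times the number of instances remaining active is A · M / M^n. -/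
/-!
Each instance `g` stays active exactly on the kernel of the linear map `f ↦ (ℓ_{g,i}(f))ᵢ` from
`(ZMod M)^E` to `(ZMod M)^n`. The staircase edges `e_{g,i}` pick out a lower triangular `n × n`
minor with diagonal entries `±1`, so this map is surjective and its kernel has `M^(|E| - n)`
elements. Summing over `f` and exchanging the two sums (linearity of expectation) gives
`A · M^(|E| - n)` active pairs `(f, g)`.
-/

open Finset Matrix

theorem LinearMap.card_ker_mul_card_of_surjective {R V W : Type*} [Ring R] [AddCommGroup V]
    [Module R V] [AddCommGroup W] [Module R W] (L : V →ₗ[R] W) (hL : Function.Surjective L) :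
    Nat.card (ker L) * Nat.card W = Nat.card V := by
  rw [(ker L).card_eq_card_quotient_mul_card,
    Nat.card_congr (L.quotKerEquivOfSurjective hL).toEquiv]

theorem Fintype.sum_card_subtype_comm {α β : Type*} [Fintype α] [Fintype β] (r : α → β → Prop)
    [∀ a b, Decidable (r a b)] :
    ∑ a, Nat.card {b // r a b} = ∑ b, Nat.card {a // r a b} := by
  simp only [Nat.card_eq_fintype_card, Fintype.card_subtype, card_filter]
  exact sum_comm

namespace Matrix

variable {R m k : Type*} [CommRing R]

def IsStaircase [LT m] (t : Matrix m k R) (e : m → k) : Prop :=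
  (∀ i, IsUnit (t i (e i))) ∧ ∀ i j, j < i → t j (e i) = 0

theorem submatrix_id_mulVec [Fintype m] [Fintype k] [DecidableEq k] (t : Matrix m k R)
    (e : m → k) (w : m → R) :
    t.submatrix id e *ᵥ w = t *ᵥ ∑ j, Pi.single (e j) (w j) := by
  rw [mulVec_sum]
  ext i
  simp [mulVec, dotProduct, mul_comm]

theorem mulVec_surjective_of_isUnit_submatrix [Fintype m] [DecidableEq m] [Fintype k]
    [DecidableEq k] (t : Matrix m k R) (e : m → k) (h : IsUnit (t.submatrix id e)) :
    Function.Surjective t.mulVec := fun v ↦ by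
  obtain ⟨w, hw⟩ := mulVec_surjective_iff_isUnit.2 h v
  exact ⟨_, (submatrix_id_mulVec t e w).symm.trans hw⟩

namespace IsStaircase

variable [LinearOrder m] {t : Matrix m k R} {e : m → k}

theorem isUnit_submatrix [Fintype m] [DecidableEq m] (h : t.IsStaircase e) :
    IsUnit (t.submatrix id e) := by
  have hlower : (t.submatrix id e).IsLowerTriangular := fun i j hij ↦ h.2 j i hij
  rw [isUnit_iff_isUnit_det, det_of_isLowerTriangular _ hlower]
  exact IsUnit.prod_univ_iff.2 h.1

theorem injective [Nontrivial R] (h : t.IsStaircase e) : Function.Injective e := by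
  intro i j hij
  by_contra hne
  rcases lt_or_gt_of_ne hne with hlt | hlt
  · exact (h.1 i).ne_zero (hij ▸ h.2 j i hlt)
  · exact (h.1 j).ne_zero (hij ▸ h.2 i j hlt)

theorem mulVec_surjective [Fintype m] [DecidableEq m] [Fintype k] [DecidableEq k]
    (h : t.IsStaircase e) : Function.Surjective t.mulVec :=
  mulVec_surjective_of_isUnit_submatrix t e h.isUnit_submatrix

theorem card_mulVec_eq_zero [Fintype R] [Nontrivial R] [Fintype m] [DecidableEq m] [Fintype k]
    [DecidableEq k] (h : t.IsStaircase e) :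
    Nat.card {f : k → R // t *ᵥ f = 0} = Fintype.card R ^ (Fintype.card k - Fintype.card m) := by
  have hker : Nat.card {f : k → R // t *ᵥ f = 0} = Nat.card (LinearMap.ker t.mulVecLin) :=
    Nat.card_congr (Equiv.subtypeEquivRight fun f ↦ by simp)
  have hcard := t.mulVecLin.card_ker_mul_card_of_surjective h.mulVec_surjective
  have hle : Fintype.card m ≤ Fintype.card k := Fintype.card_le_of_injective e h.injective
  simp only [Nat.card_eq_fintype_card, Fintype.card_pi, prod_const, card_univ] at hcard hker
  rw [hker]
  refine Nat.eq_of_mul_eq_mul_right (pow_pos (Fintype.card_pos (α := R)) (Fintype.card m)) ?_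
  rw [hcard, ← pow_add, Nat.sub_add_cancel hle]

end IsStaircase

end Matrix

theorem card_zmod_solutions_of_signed_staircase (M : ℕ) [NeZero M] [Fact (1 < M)]
    {E : Type*} [Fintype E] [DecidableEq E] {n : ℕ} (t : Fin n → E → ℤ)
    (hstair : ∃ e : Fin n → E, ∀ i : Fin n,
      (t i (e i) = 1 ∨ t i (e i) = -1) ∧ ∀ j : Fin n, j < i → t j (e i) = 0) :
    Nat.card {f : E → ZMod M // ∀ i : Fin n, ∑ e : E, (t i e : ZMod M) * f e = 0}
      = M ^ (Fintype.card E - n) := by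
  obtain ⟨e, he⟩ := hstair
  have hstaircase : (Matrix.of fun i x ↦ (t i x : ZMod M)).IsStaircase e := by
    refine ⟨fun i ↦ ?_, fun i j hji ↦ by simp [(he i).2 j hji]⟩
    rcases (he i).1 with h | h <;> simp [h]
  simpa [ZMod.card, funext_iff, mulVec, dotProduct] using hstaircase.card_mulVec_eq_zero

theorem stmt_10_general (M : ℕ) (hM : M.Prime) (E : Type*) [Fintype E] [DecidableEq E] (n : ℕ)
    (A : ℕ) (s : Fin A → Fin n → E → ℤ)
    (hstair : ∀ g : Fin A, ∃ e : Fin n → E, ∀ i : Fin n,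
      (s g i (e i) = 1 ∨ s g i (e i) = -1) ∧ ∀ j : Fin n, j < i → s g j (e i) = 0) :
    (haveI : NeZero M := ⟨hM.ne_zero⟩
     ∑ f : E → ZMod M,
       M * Nat.card {g : Fin A // ∀ i : Fin n, ∑ e : E, (s g i e : ZMod M) * f e = 0})
      = A * M * M ^ (Fintype.card E - n) := by
  have : NeZero M := ⟨hM.ne_zero⟩
  have : Fact (1 < M) := ⟨hM.one_lt⟩
  classical
  rw [← mul_sum, Fintype.sum_card_subtype_comm,
    sum_congr rfl fun g _ ↦ card_zmod_solutions_of_signed_staircase M (s g) (hstair g),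
    sum_const, card_univ, Fintype.card_fin, smul_eq_mul]
  ring

/-- Equation (19): for prime `M` and `A` stand-alone instances of a UAS with `n`
basic cycles each (signed incidence vectors `s g i : E → {-1,0,1}` satisfying the
staircase condition, with pairwise disjoint edge supports for distinct instances),
summing over all `M^|E|` relocation arrangements `f : E → ZMod M` the quantity
`M` times the number of instances staying active gives `A · M · M^(|E|-n)`;
i.e. the average number of instances in the MD code is `Ā_MD = A · F₀ · M` with
`F₀ = 1/Mⁿ`. -/
theorem stmt_10 (M : ℕ) (hM : M.Prime) (E : Type*) [Fintype E] [DecidableEq E] (n : ℕ) (hn : 1 ≤ n)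
    (A : ℕ) (hA : 1 ≤ A) (s : Fin A → Fin n → E → ℤ)
    (hs : ∀ g i e, s g i e = -1 ∨ s g i e = 0 ∨ s g i e = 1)
    (hstair : ∀ g : Fin A, ∃ e : Fin n → E, ∀ i : Fin n,
      (s g i (e i) = 1 ∨ s g i (e i) = -1) ∧ ∀ j : Fin n, j < i → s g j (e i) = 0)
    (hdisj : ∀ g g' : Fin A, g ≠ g' →
      Disjoint {e : E | ∃ i : Fin n, s g i e ≠ 0} {e : E | ∃ i : Fin n, s g' i e ≠ 0}) :
    (haveI : NeZero M := ⟨hM.ne_zero⟩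
     ∑ f : E → ZMod M,
       M * Nat.card {g : Fin A // ∀ i : Fin n, ∑ e : E, (s g i e : ZMod M) * f e = 0})
      = A * M * M ^ (Fintype.card E - n) :=
  stmt_10_general M hM E n A s hstair
end
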